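/- The following non-relationships hold: (1) ℒ ⋠ 𝒯; (2) 𝒯 ⋠ 𝒫; (3) 𝒫 ⋠ ℱ_d for every d ≥ 0. -/

import Mathlib

open SimpleGraph

/-- The reflexive closure of the adjacency relation of a graph. -/
def reflAdj {α : Type} (G : SimpleGraph α) (a b : α) : Prop := a = b ∨ G.Adj a b

/-- A set of vertices induces a connected subgraph of `G`. -/
def ConnSet {α : Type} (G : SimpleGraph α) (s : Set α) : Prop := (G.induce s).Connected

/-- `B` is an `H`-deconstruction of `G`: coverage and connectivity. -/
def IsDeconstruction {α β : Type} (G : SimpleGraph α) (H : SimpleGraph β)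
    (B : β → Set α) : Prop :=
  (∀ g g' : α, reflAdj G g g' →
      ∃ h h' : β, reflAdj H h h' ∧ g ∈ B h ∪ B h' ∧ g' ∈ B h ∪ B h') ∧
  (∀ g : α, ConnSet H {h | g ∈ B h})

/-- The family `B` (viewed as an `H`-indexed family of bags) has width at most `w`. -/
def DeconWidthLE {α β : Type} (H : SimpleGraph β) (B : β → Set α) (w : ℕ) : Prop :=
  ∀ h h' : β, reflAdj H h h' → (B h ∪ B h').ncard ≤ w

/-- `B` is an `H`-decomposition of `G`: each (refl-)edge inside a single bag, plus
connectivity. -/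
def IsDecomposition {α β : Type} (G : SimpleGraph α) (H : SimpleGraph β)
    (B : β → Set α) : Prop :=
  (∀ g g' : α, reflAdj G g g' → ∃ h : β, g ∈ B h ∧ g' ∈ B h) ∧
  (∀ g : α, ConnSet H {h | g ∈ B h})

/-- A finite simple graph, presented on a vertex set `Fin n`. -/
structure FinGraph where
  n : ℕ
  G : SimpleGraph (Fin n)

/-- `𝒢 ≼ ℋ` : every graph in `𝒢` has an `H`-deconstruction of width `≤ w`
for some `H ∈ ℋ`, for a uniform constant `w`. -/
def DeconLE (𝒢 ℋ : Set FinGraph) : Prop :=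
  ∃ w : ℕ, ∀ G ∈ 𝒢, ∃ H ∈ ℋ, ∃ B : Fin H.n → Set (Fin G.n),
    IsDeconstruction G.G H.G B ∧ DeconWidthLE H.G B w

/-- `𝒢 ≡ ℋ`. -/
def DeconEquiv (𝒢 ℋ : Set FinGraph) : Prop := DeconLE 𝒢 ℋ ∧ DeconLE ℋ 𝒢

/-- `𝒢 ≺ ℋ`. -/
def DeconLT (𝒢 ℋ : Set FinGraph) : Prop := DeconLE 𝒢 ℋ ∧ ¬ DeconEquiv 𝒢 ℋ

/-- `μ` is a minor map from `M` to `G`. -/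
def IsMinorMap {α β : Type} (M : SimpleGraph α) (G : SimpleGraph β)
    (μ : α → Set β) : Prop :=
  (∀ m : α, ConnSet G (μ m)) ∧
  (∀ m m' : α, m ≠ m' → Disjoint (μ m) (μ m')) ∧
  (∀ m m' : α, M.Adj m m' → ∃ g ∈ μ m, ∃ g' ∈ μ m', G.Adj g g')

/-- `M` is a minor of `G`. -/
def IsMinor (M G : FinGraph) : Prop :=
  ∃ μ : Fin M.n → Set (Fin G.n), IsMinorMap M.G G.G μ

/-- The class of all minors of graphs in `𝒢`. -/
def minorsCl (𝒢 : Set FinGraph) : Set FinGraph := {M | ∃ G ∈ 𝒢, IsMinor M G}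

/-- The (connected) graph `G`, viewed as a tree, has height at most `d`:
some rooting puts every vertex within distance `d` of the root. -/
def treeHeightLE (G : FinGraph) (d : ℕ) : Prop :=
  ∃ r : Fin G.n, ∀ v : Fin G.n, G.G.dist r v ≤ d

/-- Every connected component of `G` has height at most `d`. -/
def forestHeightLE (G : FinGraph) (d : ℕ) : Prop :=
  ∀ v : Fin G.n, ∃ r : Fin G.n, G.G.Reachable r v ∧
    ∀ u : Fin G.n, G.G.Reachable r u → G.G.dist r u ≤ d

/-- `ℒ` : the class of all finite simple graphs. -/
def classL : Set FinGraph := Set.univ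

/-- `𝒯` : the class of all finite trees. -/
def classT : Set FinGraph := {G | G.G.IsTree}

/-- `𝒫` : the class of all finite paths (on at least two vertices). -/
def classP : Set FinGraph := {G | ∃ m : ℕ, 2 ≤ m ∧ Nonempty (G.G ≃g pathGraph m)}

/-- `𝒯_d` : all finite trees of height at most `d`. -/
def classTd (d : ℕ) : Set FinGraph := {G | G.G.IsTree ∧ treeHeightLE G d}

/-- `ℱ_d` : all finite forests of height at most `d`. -/
def classFd (d : ℕ) : Set FinGraph := {G | G.G.IsAcyclic ∧ forestHeightLE G d}

/-- The complete `k`-ary tree `T_{h,k}` of height `h`, on strings over `[k]` of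
length at most `h`; each string of length `< h` is joined to its one-symbol extensions. -/
def kAryTree (h k : ℕ) : SimpleGraph {l : List (Fin k) // l.length ≤ h} :=
  SimpleGraph.fromRel (fun a b => ∃ i : Fin k, b.1 = i :: a.1)

/-- For every `k ≥ 1`, the tree `T_{h,k}` is a minor of some graph in `𝒢`. -/
def StackAll (𝒢 : Set FinGraph) (h : ℕ) : Prop :=
  ∀ k : ℕ, 1 ≤ k → ∃ G ∈ 𝒢, ∃ μ : {l : List (Fin k) // l.length ≤ h} → Set (Fin G.n),
    IsMinorMap (kAryTree h k) G.G μ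

/-- `𝒢` has stack depth (exactly) `d`. -/
def HasStackDepth (𝒢 : Set FinGraph) (d : ℕ) : Prop :=
  StackAll 𝒢 d ∧ ¬ StackAll 𝒢 (d + 1)

/-- The tree depth of `G` is at most `h`: there is a rooted forest on the vertex
set of `G` (given by a parent function whose fixed points are the roots) of height
at most `h` whose (ancestor-descendant) closure contains all edges of `G`. -/
def TreeDepthLE {α : Type} (G : SimpleGraph α) (h : ℕ) : Prop :=
  ∃ par : α → α,
    (∀ v : α, par (par^[h] v) = par^[h] v) ∧
    (∀ u v : α, G.Adj u v → (∃ k : ℕ, par^[k] u = v) ∨ (∃ k : ℕ, par^[k] v = u))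

/-- The class `𝒢` has bounded tree depth. -/
def HasBoundedTreeDepth (𝒢 : Set FinGraph) : Prop :=
  ∃ h : ℕ, ∀ G ∈ 𝒢, TreeDepthLE G.G h

/-- The class `𝒢` has bounded treewidth (via tree decompositions). -/
def HasBoundedTreewidth (𝒢 : Set FinGraph) : Prop :=
  ∃ w : ℕ, ∀ G ∈ 𝒢, ∃ H : FinGraph, H.G.IsTree ∧
    ∃ B : Fin H.n → Set (Fin G.n), IsDecomposition G.G H.G B ∧ ∀ h, (B h).ncard ≤ w + 1

/-- The class `𝒢` has bounded pathwidth (via path decompositions). -/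
def HasBoundedPathwidth (𝒢 : Set FinGraph) : Prop :=
  ∃ w : ℕ, ∀ G ∈ 𝒢, ∃ H : FinGraph, H ∈ classP ∧
    ∃ B : Fin H.n → Set (Fin G.n), IsDecomposition G.G H.G B ∧ ∀ h, (B h).ncard ≤ w + 1

/-- A finite rooted tree. -/
structure RootedFinTree where
  n : ℕ
  G : SimpleGraph (Fin n)
  isTree : G.IsTree
  root : Fin n

/-- `c` is a child of `p` in the rooted tree `T`. -/
def RootedFinTree.IsChild (T : RootedFinTree) (p c : Fin T.n) : Prop :=
  T.G.Adj p c ∧ T.G.dist T.root c = T.G.dist T.root p + 1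

/-- `a` is an ancestor of `v` in the rooted tree `T` (i.e. `a` lies on the unique
path from the root to `v`). -/
def RootedFinTree.Ancestor (T : RootedFinTree) (a v : Fin T.n) : Prop :=
  T.G.dist T.root v = T.G.dist T.root a + T.G.dist a v

/-- `(μ m)_{m}` is a nice `M`-deconstruction of `G`, for rooted trees `M`, `G`. -/
def IsNiceDecon (M G : RootedFinTree) (μ : Fin M.n → Set (Fin G.n)) : Prop :=
  IsDeconstruction G.G M.G μ ∧
  IsMinorMap M.G G.G μ ∧
  G.root ∈ μ M.root ∧
  (∀ (m m' : Fin M.n) (g g' : Fin G.n),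
    M.IsChild m m' → g ∈ μ m → g' ∈ μ m' → G.G.Adj g g' → G.IsChild g g')

/-- The node `u` of the rooted tree `T` has property `P(d,k)`. -/
def PropP (T : RootedFinTree) (k : ℕ) : ℕ → Fin T.n → Prop
  | 0, _ => True
  | d + 1, u => ∃ s : Finset (Fin T.n), s.card = k ∧
      (∀ v ∈ s, T.Ancestor u v) ∧
      (∀ v ∈ s, ∀ w ∈ s, v ≠ w → ¬ T.Ancestor v w ∧ ¬ T.Ancestor w v) ∧
      (∀ v ∈ s, PropP T k d v)

/-!
(1) In a tree deconstruction of the complete graph, the subtrees `{h | g ∈ B h}` pairwise touch,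
so all of those missing a node `h` lie in a single branch at `h`. If no bag and no pair of
adjacent bags holds every vertex, let each node point to that branch. A tree has fewer edges
than nodes, so two adjacent nodes point at each other, and a subtree missing both of them would
lie on both sides of a bridge.

(2) In a path deconstruction of the complete ternary tree of height `h`, every node `l` whose
subtree has height `n` has an edge `{t, t + 1}` of the host path met by the bags of at least
`n + 1` descendants of `l`: sort the edges found for the three children; a walk between active
descendants of the two outer children passes through `l` and crosses the median edge outside the
median subtree. At the root this forces width `> h`.

(3) In a deconstruction of a path into a forest of height `d`, a run of path vertices whose bags
avoid a node `r` lies in one branch at `r`, of height `d - 1`; the bag at `r` holds at most `w`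
path vertices, so by induction on `d` a path on `n` vertices needs `n + 1 ≤ (w + 1) ^ (d + 1)`.
-/

variable {α β : Type}

lemma reflAdj.symm {H : SimpleGraph β} {a b : β} (h : reflAdj H a b) : reflAdj H b a :=
  h.imp Eq.symm Adj.symm

lemma reflAdj_top (a b : α) : reflAdj (⊤ : SimpleGraph α) a b :=
  or_iff_not_imp_left.mpr (top_adj a b).mpr

lemma reflAdj.map_iso {α' : Type} {G : SimpleGraph α} {G' : SimpleGraph α'} (φ : G ≃g G')
    {a b : α} (h : reflAdj G a b) : reflAdj G' (φ a) (φ b) :=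
  h.imp (congrArg φ) φ.map_adj_iff.mpr

lemma ConnSet.nonempty {H : SimpleGraph β} {s : Set β} (h : ConnSet H s) : s.Nonempty :=
  Set.nonempty_coe_sort.mp (Connected.nonempty h)

lemma ConnSet.exists_walk {H : SimpleGraph β} {s : Set β} (h : ConnSet H s) {x y : β}
    (hx : x ∈ s) (hy : y ∈ s) : ∃ p : H.Walk x y, ∀ v ∈ p.support, v ∈ s := by
  obtain ⟨q⟩ := h.preconnected ⟨x, hx⟩ ⟨y, hy⟩
  refine ⟨q.map (Embedding.induce s).toHom, fun v hv => ?_⟩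
  obtain ⟨⟨u, hu⟩, -, rfl⟩ := List.mem_map.mp (q.support_map _ ▸ hv)
  exact hu

lemma ConnSet.preimage_iso {β' : Type} {H : SimpleGraph β} {H' : SimpleGraph β'} (ψ : H' ≃g H)
    {s : Set β} (hs : ConnSet H s) : ConnSet H' (ψ ⁻¹' s) :=
  (ψ.induce ψ.bijective.bijOn_preimage).connected_iff.mpr hs

def ReachableAvoiding (H : SimpleGraph β) (F : Set β) (u v : β) : Prop :=
  ∃ p : H.Walk u v, ∀ w ∈ p.support, w ∉ F

namespace ReachableAvoiding

variable {H : SimpleGraph β} {F : Set β} {u v x : β}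

lemma symm (h : ReachableAvoiding H F u v) : ReachableAvoiding H F v u :=
  let ⟨p, hp⟩ := h
  ⟨p.reverse, fun w hw => hp w (by simpa using hw)⟩

lemma trans (h : ReachableAvoiding H F u v) (h' : ReachableAvoiding H F v x) :
    ReachableAvoiding H F u x :=
  let ⟨p, hp⟩ := h
  let ⟨q, hq⟩ := h'
  ⟨p.append q, fun w hw => (Walk.mem_support_append_iff p q).mp hw |>.elim (hp w) (hq w)⟩

lemma of_reflAdj (h : reflAdj H u v) (hu : u ∉ F) (hv : v ∉ F) : ReachableAvoiding H F u v := by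
  rcases h with rfl | h
  · exact ⟨.nil, by simpa using hu⟩
  · exact ⟨h.toWalk, by simp [hu, hv]⟩

lemma of_walk {r : β} (p : H.Walk u v) (hp : r ∉ p.support) : ReachableAvoiding H {r} u v :=
  ⟨p, fun _ hw hwr => hp (hwr ▸ hw)⟩

lemma of_connSet {s : Set β} (hs : ConnSet H s) (hsF : Disjoint s F) (hu : u ∈ s) (hv : v ∈ s) :
    ReachableAvoiding H F u v :=
  let ⟨p, hp⟩ := hs.exists_walk hu hv
  ⟨p, fun w hw => hsF.notMem_of_mem_left (hp w hw)⟩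

end ReachableAvoiding

namespace SimpleGraph

variable {H : SimpleGraph β}

lemma Walk.exists_adj_walk_of_ne {r x : β} (p : H.Walk r x) (hrx : r ≠ x) :
    ∃ a, H.Adj r a ∧ ∃ q : H.Walk a x, q.length < p.length ∧ r ∉ q.support ∧
      q.support ⊆ p.support := by
  classical
  have hpath := p.bypass_isPath
  cases hb : p.bypass with
  | nil => exact absurd rfl hrx
  | cons ha q =>
    rw [hb, Walk.cons_isPath_iff] at hpath
    refine ⟨_, ha, q, ?_, hpath.2, fun v hv => p.support_bypass_subset_support ?_⟩
    · have := p.length_bypass_le_length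
      rw [hb, Walk.length_cons] at this
      omega
    · rw [hb]
      exact List.mem_cons_of_mem _ hv

lemma IsAcyclic.eq_of_adj_of_reachableAvoiding (hH : H.IsAcyclic) {r a b : β}
    (ha : H.Adj r a) (hb : H.Adj r b) (hab : ReachableAvoiding H {r} a b) : a = b := by
  obtain ⟨p, hp⟩ := hab
  have hbridge := isAcyclic_iff_forall_adj_isBridge.mp hH ha
  rw [isBridge_iff_forall_walk_mem_edges] at hbridge
  have hr : r ∉ p.reverse.support := by simpa using hp r
  have := hbridge (Walk.cons hb p.reverse)
  rw [Walk.edges_cons, List.mem_cons] at this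
  rcases this with h | h
  · exact Sym2.congr_right.mp h
  · exact absurd (p.reverse.fst_mem_support_of_mem_edges h) hr

lemma IsAcyclic.not_reachableAvoiding_of_adj (hH : H.IsAcyclic) {r a y : β} (ha : H.Adj r a)
    (h₁ : ReachableAvoiding H {r} a y) (h₂ : ReachableAvoiding H {a} r y) : False := by
  obtain ⟨p, hp⟩ := h₁
  obtain ⟨q, hq⟩ := h₂
  have hbridge := isAcyclic_iff_forall_adj_isBridge.mp hH ha
  rw [isBridge_iff_forall_walk_mem_edges] at hbridge
  have := hbridge (q.append p.reverse)
  rw [Walk.edges_append, List.mem_append] at this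
  rcases this with h | h
  · exact hq a (q.snd_mem_support_of_mem_edges h) rfl
  · exact hp r (by simpa using p.reverse.fst_mem_support_of_mem_edges h) rfl

end SimpleGraph

namespace IsDeconstruction

variable {G : SimpleGraph α} {H : SimpleGraph β} {B : β → Set α}

lemma exists_reflAdj (hd : IsDeconstruction G H B) {g g' : α} (hgg : reflAdj G g g') :
    ∃ x y, g ∈ B x ∧ g' ∈ B y ∧ reflAdj H x y := by
  obtain ⟨h, h', hr, hg, hg'⟩ := hd.1 g g' hgg
  rcases hg with hg | hg <;> rcases hg' with hg' | hg'
  · exact ⟨h, h, hg, hg', Or.inl rfl⟩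
  · exact ⟨h, h', hg, hg', hr⟩
  · exact ⟨h', h, hg, hg', hr.symm⟩
  · exact ⟨h', h', hg, hg', Or.inl rfl⟩

lemma reachableAvoiding (hd : IsDeconstruction G H B) {F : Set β} {g g' : α}
    (hgg : reflAdj G g g') (hg : ∀ h ∈ F, g ∉ B h) (hg' : ∀ h ∈ F, g' ∉ B h) {x y : β}
    (hx : g ∈ B x) (hy : g' ∈ B y) : ReachableAvoiding H F x y := by
  have hdisj : ∀ g, (∀ h ∈ F, g ∉ B h) → Disjoint {h | g ∈ B h} F :=
    fun g hg => Set.disjoint_left.mpr fun h hh hF => hg h hF hh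
  obtain ⟨x₀, y₀, hx₀, hy₀, hxy⟩ := hd.exists_reflAdj hgg
  exact ((ReachableAvoiding.of_connSet (hd.2 g) (hdisj g hg) hx hx₀).trans
    (.of_reflAdj hxy (fun hF => hg _ hF hx₀) (fun hF => hg' _ hF hy₀))).trans
    (.of_connSet (hd.2 g') (hdisj g' hg') hy₀ hy)

end IsDeconstruction

section Transport

variable {α' β' : Type} {G : SimpleGraph α} {G' : SimpleGraph α'} {H : SimpleGraph β}
  {H' : SimpleGraph β'} {B : β → Set α}

lemma IsDeconstruction.of_iso (φ : G ≃g G') (ψ : H ≃g H') (hd : IsDeconstruction G H B) :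
    IsDeconstruction G' H' fun h' => φ.symm ⁻¹' B (ψ.symm h') := by
  refine ⟨fun g g' hgg => ?_, fun g => (hd.2 (φ.symm g)).preimage_iso ψ.symm⟩
  obtain ⟨h, h', hr, hg, hg'⟩ := hd.1 _ _ (hgg.map_iso φ.symm)
  exact ⟨ψ h, ψ h', hr.map_iso ψ, by simpa using hg, by simpa using hg'⟩

lemma DeconWidthLE.of_iso (φ : α ≃ α') (ψ : H ≃g H') {w : ℕ} (hw : DeconWidthLE H B w) :
    DeconWidthLE H' (fun h' => φ.symm ⁻¹' B (ψ.symm h')) w := fun h h' hr => by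
  rw [← Set.preimage_union, Set.ncard_preimage_of_injective_subset_range φ.symm.injective
    (by simp)]
  exact hw _ _ (hr.map_iso ψ.symm)

end Transport

lemma DeconWidthLE.exists_notMem_of_lt_card {H : SimpleGraph β} {B : β → Set α} {w : ℕ}
    (hw : DeconWidthLE H B w) (hlt : w < Nat.card α) {h h' : β} (hr : reflAdj H h h') :
    ∃ g, g ∉ B h ∧ g ∉ B h' := by
  have : Finite α := Nat.finite_of_card_ne_zero (by omega)
  by_contra! hall
  have hcard := Set.ncard_le_ncard (s := Set.univ)
    (fun g _ => or_iff_not_imp_left.mpr (hall g)) (Set.toFinite (B h ∪ B h'))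
  rw [Set.ncard_univ] at hcard
  exact (hcard.trans (hw h h' hr)).not_gt hlt

lemma IsDeconstruction.exists_adj_forall_reachableAvoiding_of_top {H : SimpleGraph β}
    {B : β → Set α} (hd : IsDeconstruction ⊤ H B) (hH : H.Connected) {h : β} {g₀ : α}
    (hg₀ : g₀ ∉ B h) :
    ∃ a, H.Adj h a ∧ ∀ g x, g ∉ B h → g ∈ B x → ReachableAvoiding H {h} a x := by
  obtain ⟨x₀, hx₀⟩ := (hd.2 g₀).nonempty
  obtain ⟨p⟩ := hH h x₀
  obtain ⟨a, ha, q, -, hq, -⟩ := p.exists_adj_walk_of_ne (by rintro rfl; exact hg₀ hx₀)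
  refine ⟨a, ha, fun g x hg hx => ?_⟩
  have hxx₀ : ReachableAvoiding H {h} x x₀ :=
    hd.reachableAvoiding (reflAdj_top g g₀) (by simpa) (by simpa) hx hx₀
  exact (ReachableAvoiding.of_walk q hq).trans hxx₀.symm

lemma SimpleGraph.IsTree.card_le_of_isDeconstruction_top [Finite β] {H : SimpleGraph β}
    (hH : H.IsTree) {B : β → Set α} {w : ℕ} (hd : IsDeconstruction ⊤ H B)
    (hw : DeconWidthLE H B w) : Nat.card α ≤ w := by
  by_contra! hlt
  have hmiss : ∀ h h', reflAdj H h h' → ∃ g, g ∉ B h ∧ g ∉ B h' :=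
    fun _ _ => hw.exists_notMem_of_lt_card hlt
  have hbranch : ∀ h, ∃ a, H.Adj h a ∧
      ∀ g x, g ∉ B h → g ∈ B x → ReachableAvoiding H {h} a x := fun h =>
    let ⟨_, hg₀, _⟩ := hmiss h h (Or.inl rfl)
    hd.exists_adj_forall_reachableAvoiding_of_top hH.connected hg₀
  choose nb hnb hnbRA using hbranch
  have hnotinj : ¬ Function.Injective (fun h => ⟨s(h, nb h), hnb h⟩ : β → H.edgeSet) :=
    fun hinj => by
    have hle : Nat.card β ≤ Nat.card H.edgeSet := Nat.card_le_card_of_injective _ hinj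
    have := (isTree_iff_connected_and_card.mp hH).2
    omega
  simp only [Function.Injective, not_forall] at hnotinj
  obtain ⟨h, h', heq, hne⟩ := hnotinj
  obtain ⟨hh', hh⟩ : nb h = h' ∧ nb h' = h := by
    rcases Sym2.eq_iff.mp (congrArg Subtype.val heq) with ⟨rfl, -⟩ | ⟨h₁, h₂⟩
    · exact absurd rfl hne
    · exact ⟨h₂, h₁.symm⟩
  obtain ⟨g, hg, hg'⟩ := hmiss h (nb h) (Or.inr (hnb h))
  obtain ⟨x, hx⟩ := (hd.2 g).nonempty
  refine hH.isAcyclic.not_reachableAvoiding_of_adj (hnb h) (hnbRA h g x hg hx) ?_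
  have := hnbRA (nb h) g x hg' hx
  rw [hh', hh] at this
  rwa [hh']

theorem Nat.sub_le_ncard_mul_add_of_forall_window {s : Set ℕ} {a b M : ℕ}
    (h : ∀ c, a ≤ c → c + M < b → ∃ i ∈ s, c ≤ i ∧ i ≤ c + M) :
    b - a ≤ (s ∩ Set.Ico a b).ncard * (M + 1) + M := by
  induction b using Nat.strong_induction_on with
  | _ b ih =>
  by_cases hb : b ≤ a + M
  · omega
  obtain ⟨i, hi, hci, hic⟩ := h (b - (M + 1)) (by omega) (by omega)
  have hia := ih i (by omega) fun c hc hci => h c hc (by omega)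
  have hcount : (s ∩ Set.Ico a i).ncard + 1 ≤ (s ∩ Set.Ico a b).ncard := by
    rw [← Set.ncard_insert_of_notMem (fun hmem => lt_irrefl i hmem.2.2)
      ((Set.finite_Ico a i).inter_of_right s)]
    refine Set.ncard_le_ncard ?_ ((Set.finite_Ico a b).inter_of_right s)
    rintro j (rfl | ⟨hj, hj'⟩)
    · exact ⟨hi, by omega, by omega⟩
    · exact ⟨hj, hj'.1, by simp at hj'; omega⟩
  have := Nat.mul_le_mul_right (M + 1) hcount
  rw [add_mul, one_mul] at this
  omega

lemma IsDeconstruction.reachableAvoiding_of_pathGraph {n : ℕ} {H : SimpleGraph β}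
    {B : β → Set (Fin n)} (hd : IsDeconstruction (pathGraph n) H B) {F : Set β} {i j : Fin n}
    (hij : i ≤ j) (hF : ∀ k, i ≤ k → k ≤ j → ∀ h ∈ F, k ∉ B h) {x y : β} (hx : i ∈ B x)
    (hy : j ∈ B y) : ReachableAvoiding H F x y := by
  obtain ⟨d, hd'⟩ : ∃ d, j.val = i.val + d := ⟨j - i, by omega⟩
  induction d generalizing j y with
  | zero =>
    obtain rfl : j = i := Fin.ext hd'
    exact hd.reachableAvoiding (Or.inl rfl) (hF _ le_rfl hij) (hF _ le_rfl hij) hx hy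
  | succ d ih =>
    set j' : Fin n := ⟨i + d, by omega⟩
    have hj' : j' ≤ j := Fin.le_iff_val_le_val.mpr (by simp [j']; omega)
    obtain ⟨y', hy'⟩ := (hd.2 j').nonempty
    have hadj : (pathGraph n).Adj j' j := pathGraph_adj.mpr (Or.inl (by simp [j']; omega))
    have hij' : i ≤ j' := Fin.le_iff_val_le_val.mpr (by simp [j'])
    have hxy' : ReachableAvoiding H F x y' :=
      ih hij' (fun k hk hkj => hF k hk (hkj.trans hj')) hy' rfl
    exact hxy'.trans
      (hd.reachableAvoiding (Or.inr hadj) (hF j' hij' hj') (hF j hij le_rfl) hy' hy)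

/-- `F` will collect the nodes above `r`, so that walks from `r` cannot climb out of the branch
below it. -/
def ShortWalkAvoiding (H : SimpleGraph β) (F : Set β) (d : ℕ) (r x : β) : Prop :=
  ∃ p : H.Walk r x, p.length < d ∧ ∀ v ∈ p.support, v ∉ F

lemma ShortWalkAvoiding.exists_adj {H : SimpleGraph β} {F : Set β} {d : ℕ} {r x : β}
    (h : ShortWalkAvoiding H F (d + 1) r x) (hrx : r ≠ x) :
    ∃ a, H.Adj r a ∧ ∃ q : H.Walk a x, q.length < d ∧ r ∉ q.support ∧ ∀ v ∈ q.support, v ∉ F := by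
  obtain ⟨p, hp, hpF⟩ := h
  obtain ⟨a, ha, q, hq, hr, hsub⟩ := p.exists_adj_walk_of_ne hrx
  exact ⟨a, ha, q, by omega, hr, fun v hv => hpF v (hsub hv)⟩

namespace IsDeconstruction

variable {n w : ℕ} {H : SimpleGraph β} {B : β → Set (Fin n)}

lemma exists_shortWalkAvoiding_insert (hH : H.IsAcyclic)
    (hd : IsDeconstruction (pathGraph n) H B) {F : Set β} {r : β} {d c e : ℕ} (hce : c < e)
    (hen : e ≤ n) (hmiss : ∀ i : Fin n, c ≤ i → i < e → i ∉ B r)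
    (hnear : ∀ i : Fin n, c ≤ i → i < e → ∀ x, i ∈ B x → ShortWalkAvoiding H F (d + 1) r x) :
    ∃ a, ∀ i : Fin n, c ≤ i → i < e → ∀ x, i ∈ B x →
      ShortWalkAvoiding H (insert r F) d a x := by
  set c' : Fin n := ⟨c, by omega⟩
  obtain ⟨x₀, hx₀⟩ := (hd.2 c').nonempty
  have hne : ∀ {i : Fin n} {x}, c ≤ i → i < e → i ∈ B x → r ≠ x := by
    rintro i x hci hie hx rfl
    exact hmiss i hci hie hx
  obtain ⟨a, ha, q₀, -, hq₀, -⟩ :=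
    (hnear c' le_rfl hce x₀ hx₀).exists_adj (hne (i := c') le_rfl hce hx₀)
  refine ⟨a, fun i hci hie x hx => ?_⟩
  obtain ⟨a', ha', q, hq, hrq, hqF⟩ := (hnear i hci hie x hx).exists_adj (hne hci hie hx)
  have hxx₀ : ReachableAvoiding H {r} x₀ x :=
    hd.reachableAvoiding_of_pathGraph (Fin.le_iff_val_le_val.mpr hci)
      (fun k hk hki h hh => Set.mem_singleton_iff.mp hh ▸ hmiss k hk (by omega)) hx₀ hx
  obtain rfl : a = a' := hH.eq_of_adj_of_reachableAvoiding ha ha'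
    (((ReachableAvoiding.of_walk q₀ hq₀).trans hxx₀).trans (.of_walk q.reverse (by simpa)))
  refine ⟨q, hq, fun v hv hvF => ?_⟩
  rcases hvF with rfl | hvF
  exacts [hrq hv, hqF v hv hvF]

theorem sub_add_one_le_pow_of_pathGraph (hH : H.IsAcyclic)
    (hd : IsDeconstruction (pathGraph n) H B) (hw : DeconWidthLE H B w) (d : ℕ) :
    ∀ {F : Set β} {r : β} {a b : ℕ}, b ≤ n →
      (∀ i : Fin n, a ≤ i → i < b → ∀ x, i ∈ B x → ShortWalkAvoiding H F d r x) →
      b - a + 1 ≤ (w + 1) ^ d := by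
  induction d with
  | zero =>
    intro F r a b hbn hnear
    rw [pow_zero]
    by_contra! hab
    obtain ⟨x, hx⟩ := (hd.2 ⟨a, by omega⟩).nonempty
    obtain ⟨p, hp, -⟩ := hnear ⟨a, by omega⟩ le_rfl (by simp; omega) x hx
    exact Nat.not_lt_zero _ hp
  | succ d ih =>
    intro F r a b hbn hnear
    obtain ⟨M, hM⟩ : ∃ M, (w + 1) ^ d = M + 1 := Nat.exists_eq_add_one.mpr (by positivity)
    have hwindow : ∀ c, a ≤ c → c + M < b → ∃ i ∈ Fin.val '' B r, c ≤ i ∧ i ≤ c + M := by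
      intro c hac hcb
      by_contra! hno
      obtain ⟨a', ha'⟩ := hd.exists_shortWalkAvoiding_insert hH (e := c + M + 1) (by omega)
        (by omega) (fun i hci hie hi => absurd (hno i ⟨i, hi, rfl⟩ hci) (by omega))
        (fun i hci hie => hnear i (by omega) (by omega))
      have := ih (by omega) ha'
      omega
    have hI : (Fin.val '' B r ∩ Set.Ico a b).ncard ≤ w := by
      refine (Set.ncard_le_ncard Set.inter_subset_left (Set.toFinite _)).trans ?_
      rw [Set.ncard_image_of_injective _ Fin.val_injective, ← Set.union_self (B r)]
      exact hw r r (Or.inl rfl)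
    have := Nat.sub_le_ncard_mul_add_of_forall_window hwindow
    have := Nat.mul_le_mul_right (M + 1) hI
    calc b - a + 1 ≤ (w + 1) * (M + 1) := by rw [add_one_mul]; omega
      _ = (w + 1) ^ (d + 1) := by rw [pow_succ, hM, mul_comm]

theorem add_one_le_pow_of_pathGraph {d : ℕ} (hH : H.IsAcyclic)
    (hd : IsDeconstruction (pathGraph n) H B)
    (hw : DeconWidthLE H B w)
    (hheight : ∀ v, ∃ r, H.Reachable r v ∧ ∀ u, H.Reachable r u → H.dist r u ≤ d) :
    n + 1 ≤ (w + 1) ^ (d + 1) := by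
  rcases Nat.eq_zero_or_pos n with rfl | hn
  · exact Nat.one_le_pow _ _ (Nat.succ_pos w)
  obtain ⟨x₀, hx₀⟩ := (hd.2 ⟨0, hn⟩).nonempty
  obtain ⟨r, hr, hdist⟩ := hheight x₀
  suffices ∀ i : Fin n, ∀ x, i ∈ B x → ShortWalkAvoiding H ∅ (d + 1) r x by
    simpa using hd.sub_add_one_le_pow_of_pathGraph hH hw (d + 1) (a := 0) le_rfl
      fun i _ _ => this i
  intro i x hx
  obtain ⟨p, -⟩ := hd.reachableAvoiding_of_pathGraph (F := ∅)
    (Fin.le_iff_val_le_val.mpr (Nat.zero_le _)) (by simp) hx₀ hx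
  have hrx := hr.trans ⟨p⟩
  obtain ⟨q, hq⟩ := hrx.exists_walk_length_eq_dist
  exact ⟨q, hq ▸ Nat.lt_succ_of_le (hdist x hrx), by simp⟩

end IsDeconstruction

lemma List.eq_of_cons_isSuffix_of_cons_isSuffix {γ : Type} {i j : γ} {l g : List γ}
    (hi : i :: l <:+ g) (hj : j :: l <:+ g) : i = j := by
  rcases List.suffix_or_suffix_of_suffix hi hj with h | h <;>
    simpa [eq_comm] using h.eq_of_length (by simp)

lemma SimpleGraph.isAcyclic_of_forall_adj_parent {G : SimpleGraph α} (par : α → α) (ρ : α → ℕ)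
    (hpar : ∀ a b, G.Adj a b → (b = par a ∧ ρ b < ρ a) ∨ (a = par b ∧ ρ a < ρ b)) :
    G.IsAcyclic := by
  classical
  intro v c hc
  obtain ⟨u, hu, humax⟩ := c.support.toFinset.exists_max_image ρ ⟨v, by simp⟩
  rw [List.mem_toFinset] at hu
  set c' := c.rotate u hu
  have hc' : c'.IsCycle := hc.rotate hu
  have hmax : ∀ x ∈ c'.support, ρ x ≤ ρ u := fun x hx =>
    humax x (List.mem_toFinset.mpr ((c.mem_support_rotate_iff u hu).mp hx))
  have hnil : ¬ c'.Nil := hc'.not_nil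
  have hparent : ∀ x ∈ c'.support, G.Adj u x → x = par u := fun x hx hux =>
    ((hpar u x hux).resolve_right fun ⟨_, hlt⟩ => (hmax x hx).not_gt hlt).1
  exact hc'.snd_ne_penultimate <|
    (hparent _ (c'.getVert_mem_support 1) (c'.adj_snd hnil)).trans
      (hparent _ (c'.getVert_mem_support _) (c'.adj_penultimate hnil).symm).symm

abbrev KAryVertex (h k : ℕ) : Type := {l : List (Fin k) // l.length ≤ h}

instance (h k : ℕ) : Finite (KAryVertex h k) := (List.finite_length_le (Fin k) h).to_subtype

namespace kAryTree

variable {h k : ℕ}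

lemma adj_cons {i : Fin k} {l : List (Fin k)} (hl : (i :: l).length ≤ h) :
    (kAryTree h k).Adj ⟨i :: l, hl⟩ ⟨l, (List.suffix_cons i l).length_le.trans hl⟩ := by
  refine (fromRel_adj _ _ _).mpr ⟨fun he => ?_, Or.inr ⟨i, rfl⟩⟩
  simpa using congrArg (fun v : KAryVertex h k => v.1.length) he

lemma exists_walk_of_isSuffix {l : KAryVertex h k} (g : List (Fin k)) (hg : g.length ≤ h)
    (hlg : l.1 <:+ g) :
    ∃ p : (kAryTree h k).Walk ⟨g, hg⟩ l, ∀ v ∈ p.support, l.1 <:+ v.1 ∧ v.1 <:+ g := by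
  induction g with
  | nil =>
    obtain rfl : l = ⟨[], hg⟩ := Subtype.ext (List.eq_nil_of_suffix_nil hlg)
    exact ⟨.nil, by simp⟩
  | cons i g ih =>
    rcases List.suffix_cons_iff.mp hlg with heq | hlg'
    · obtain rfl : l = ⟨i :: g, hg⟩ := Subtype.ext heq
      exact ⟨.nil, by simp⟩
    obtain ⟨p, hp⟩ := ih ((List.suffix_cons i g).length_le.trans hg) hlg'
    refine ⟨.cons (adj_cons hg) p, fun v hv => ?_⟩
    rcases List.mem_cons.mp (Walk.support_cons _ _ ▸ hv) with rfl | hv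
    · exact ⟨hlg, List.suffix_rfl⟩
    · exact ⟨(hp v hv).1, (hp v hv).2.trans (List.suffix_cons i g)⟩

lemma isTree : (kAryTree h k).IsTree := by
  refine ⟨(connected_iff_exists_forall_reachable _).mpr ⟨⟨[], by simp⟩, fun v => ?_⟩, ?_⟩
  · obtain ⟨p, -⟩ := exists_walk_of_isSuffix (l := ⟨[], by simp⟩) v.1 v.2 List.nil_suffix
    exact ⟨p.reverse⟩
  refine isAcyclic_of_forall_adj_parent (fun v => ⟨v.1.tail, ?_⟩) (fun v => v.1.length) ?_
  · exact (List.tail_suffix v.1).length_le.trans v.2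
  rintro a b hab
  obtain ⟨-, ⟨i, hi⟩ | ⟨i, hi⟩⟩ := (fromRel_adj _ _ _).mp hab
  · exact Or.inr ⟨Subtype.ext (by simp [hi]), by simp [hi]⟩
  · exact Or.inl ⟨Subtype.ext (by simp [hi]), by simp [hi]⟩

end kAryTree

lemma SimpleGraph.Walk.mem_support_pathGraph {m : ℕ} {x y z : Fin m}
    (p : (pathGraph m).Walk x y) (hxz : x ≤ z) (hzy : z ≤ y) : z ∈ p.support := by
  induction p with
  | nil => simp [le_antisymm hzy hxz]
  | @cons x x' y ha q ih =>
    rcases eq_or_lt_of_le hxz with rfl | hlt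
    · exact Walk.start_mem_support _
    · have := pathGraph_adj.mp ha
      exact List.mem_cons_of_mem _ (ih (Fin.le_iff_val_le_val.mpr (by omega)) hzy)

lemma ConnSet.ordConnected_pathGraph {m : ℕ} {s : Set (Fin m)} (hs : ConnSet (pathGraph m) s) :
    s.OrdConnected :=
  ⟨fun _ hx _ hy _ hz =>
    let ⟨p, hp⟩ := hs.exists_walk hx hy
    hp _ (p.mem_support_pathGraph hz.1 hz.2)⟩

namespace IsDeconstruction

variable {V : Type} {G : SimpleGraph V} {m : ℕ} {B : Fin (m + 1) → Set V}

lemma mem_union_of_le_succ_of_castSucc_le (hd : IsDeconstruction G (pathGraph (m + 1)) B)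
    (t : Fin m) {g : V} {x y : Fin (m + 1)} (hx : g ∈ B x) (hy : g ∈ B y) (hxt : x ≤ t.succ)
    (hty : t.castSucc ≤ y) : g ∈ B t.castSucc ∪ B t.succ := by
  by_cases htx : t.castSucc ≤ x
  · rcases eq_or_lt_of_le htx with rfl | hlt
    · exact Or.inl hx
    · obtain rfl : x = t.succ := le_antisymm hxt (Fin.castSucc_lt_iff_succ_le.mp hlt)
      exact Or.inr hx
  · exact Or.inl ((ConnSet.ordConnected_pathGraph (hd.2 g)).out hx hy ⟨(not_le.mp htx).le, hty⟩)

lemma exists_mem_support_mem_union (hd : IsDeconstruction G (pathGraph (m + 1)) B) (t : Fin m)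
    {g g' : V} (p : G.Walk g g') {x y : Fin (m + 1)} (hx : g ∈ B x) (hxt : x ≤ t.succ)
    (hy : g' ∈ B y) (hty : t.castSucc ≤ y) : ∃ v ∈ p.support, v ∈ B t.castSucc ∪ B t.succ := by
  induction p generalizing x with
  | nil =>
    exact ⟨_, Walk.start_mem_support _, hd.mem_union_of_le_succ_of_castSucc_le t hx hy hxt hty⟩
  | cons ha q ih =>
    obtain ⟨x', y', hx', hy', hxy'⟩ := hd.exists_reflAdj (Or.inr ha)
    by_cases htx : t.castSucc ≤ x'
    · exact ⟨_, Walk.start_mem_support _, hd.mem_union_of_le_succ_of_castSucc_le t hx hx' hxt htx⟩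
    · have : y' ≤ t.succ := by
        rcases hxy' with rfl | hadj
        · exact (not_le.mp htx).le.trans (Fin.castSucc_le_succ t)
        · have := pathGraph_adj.mp hadj
          have := not_le.mp htx
          simp only [Fin.le_def, Fin.lt_def, Fin.val_castSucc, Fin.val_succ] at this ⊢
          omega
      obtain ⟨v, hv, hvB⟩ := ih hy' this hy
      exact ⟨v, List.mem_cons_of_mem _ hv, hvB⟩

end IsDeconstruction

lemma Fin.exists_castSucc_eq_or_succ_eq {m : ℕ} (hm : 0 < m) (x : Fin (m + 1)) :
    ∃ t : Fin m, t.castSucc = x ∨ t.succ = x := by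
  by_cases hx : x.val < m
  · exact ⟨⟨x, hx⟩, Or.inl rfl⟩
  · exact ⟨⟨m - 1, by omega⟩, Or.inr (Fin.ext (by simp; omega))⟩

section KAryTreeInPath

variable {h k m : ℕ}

def activeDescendants (B : Fin (m + 1) → Set (KAryVertex h k)) (t : Fin m) (l : KAryVertex h k) :
    Set (KAryVertex h k) :=
  {g | l.1 <:+ g.1 ∧ g ∈ B t.castSucc ∪ B t.succ}

namespace IsDeconstruction

lemma exists_isSuffix_mem_union {B : Fin (m + 1) → Set (KAryVertex h k)}
    (hd : IsDeconstruction (kAryTree h k) (pathGraph (m + 1)) B) (t : Fin m) {l g g' : KAryVertex h k} (hg : l.1 <:+ g.1) (hg' : l.1 <:+ g'.1)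
    {x y : Fin (m + 1)} (hx : g ∈ B x) (hxt : x ≤ t.succ) (hy : g' ∈ B y)
    (hty : t.castSucc ≤ y) :
    ∃ v, l.1 <:+ v.1 ∧ (v.1 <:+ g.1 ∨ v.1 <:+ g'.1) ∧ v ∈ B t.castSucc ∪ B t.succ := by
  obtain ⟨p, hp⟩ := kAryTree.exists_walk_of_isSuffix g.1 g.2 hg
  obtain ⟨p', hp'⟩ := kAryTree.exists_walk_of_isSuffix g'.1 g'.2 hg'
  obtain ⟨v, hv, hvB⟩ := hd.exists_mem_support_mem_union t (p.append p'.reverse) hx hxt hy hty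
  rcases (Walk.mem_support_append_iff _ _).mp hv with hv | hv
  · exact ⟨v, (hp v hv).1, Or.inl (hp v hv).2, hvB⟩
  · rw [Walk.support_reverse, List.mem_reverse] at hv
    exact ⟨v, (hp' v hv).1, Or.inr (hp' v hv).2, hvB⟩

lemma exists_succ_le_ncard_activeDescendants {B : Fin (m + 1) → Set (KAryVertex h 3)}
    (hd : IsDeconstruction (kAryTree h 3) (pathGraph (m + 1)) B) {n : ℕ} (l : KAryVertex h 3)
    (hl : l.1.length < h)
    (hchild : ∀ i : Fin 3, ∃ t, n + 1 ≤ (activeDescendants B t ⟨i :: l.1, hl⟩).ncard) :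
    ∃ t, n + 2 ≤ (activeDescendants B t l).ncard := by
  choose tt htt using hchild
  have hsort := Tuple.monotone_sort tt
  set σ := Tuple.sort tt
  have hactive : ∀ i, (activeDescendants B (tt i) ⟨i :: l.1, hl⟩).Nonempty := fun i =>
    Set.nonempty_of_ncard_ne_zero (Nat.one_le_iff_ne_zero.mp ((Nat.le_add_left 1 n).trans (htt i)))
  obtain ⟨ga, hga, hgaB⟩ := hactive (σ 0)
  obtain ⟨gc, hgc, hgcB⟩ := hactive (σ 2)
  have h01 : tt (σ 0) ≤ tt (σ 1) := hsort (by decide)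
  have h12 : tt (σ 1) ≤ tt (σ 2) := hsort (by decide)
  obtain ⟨x, hx, hxt⟩ : ∃ x, ga ∈ B x ∧ x ≤ (tt (σ 1)).succ := by
    rcases hgaB with hg | hg
    · exact ⟨_, hg, (Fin.castSucc_le_succ _).trans (Fin.succ_le_succ_iff.mpr h01)⟩
    · exact ⟨_, hg, Fin.succ_le_succ_iff.mpr h01⟩
  obtain ⟨y, hy, hty⟩ : ∃ y, gc ∈ B y ∧ (tt (σ 1)).castSucc ≤ y := by
    rcases hgcB with hg | hg
    · exact ⟨_, hg, Fin.castSucc_le_castSucc_iff.mpr h12⟩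
    · exact ⟨_, hg, (Fin.castSucc_le_castSucc_iff.mpr h12).trans (Fin.castSucc_le_succ _)⟩
  obtain ⟨v, hlv, hvg, hvB⟩ := hd.exists_isSuffix_mem_union (tt (σ 1))
    ((List.suffix_cons _ _).trans hga) ((List.suffix_cons _ _).trans hgc) hx hxt hy hty
  have hv : v ∉ activeDescendants B (tt (σ 1)) ⟨σ 1 :: l.1, hl⟩ := fun ⟨hbv, _⟩ => by
    rcases hvg with hvg | hvg
    · exact absurd (σ.injective (List.eq_of_cons_isSuffix_of_cons_isSuffix hga (hbv.trans hvg)))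
        (by decide)
    · exact absurd (σ.injective (List.eq_of_cons_isSuffix_of_cons_isSuffix hgc (hbv.trans hvg)))
        (by decide)
  refine ⟨tt (σ 1), (Nat.add_le_add_right (htt (σ 1)) 1).trans ?_⟩
  rw [← Set.ncard_insert_of_notMem hv (Set.toFinite _)]
  refine Set.ncard_le_ncard ?_ (Set.toFinite _)
  rintro g (rfl | ⟨hg, hgB⟩)
  exacts [⟨hlv, hvB⟩, ⟨(List.suffix_cons _ _).trans hg, hgB⟩]

lemma exists_le_ncard_activeDescendants {B : Fin (m + 1) → Set (KAryVertex h 3)}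
    (hd : IsDeconstruction (kAryTree h 3) (pathGraph (m + 1)) B) (hm : 0 < m) (n : ℕ) :
    ∀ l : KAryVertex h 3, l.1.length + n ≤ h → ∃ t, n + 1 ≤ (activeDescendants B t l).ncard := by
  induction n with
  | zero =>
    intro l _
    obtain ⟨x, hx⟩ := (hd.2 l).nonempty
    obtain ⟨t, ht⟩ := Fin.exists_castSucc_eq_or_succ_eq hm x
    refine ⟨t, Nat.one_le_iff_ne_zero.mpr
      (Set.ncard_ne_zero_of_mem ⟨List.suffix_rfl, ?_⟩ (Set.toFinite _))⟩
    rcases ht with rfl | rfl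
    exacts [Or.inl hx, Or.inr hx]
  | succ n ih =>
    intro l hl
    exact hd.exists_succ_le_ncard_activeDescendants l (by omega)
      fun i => ih _ (by simp; omega)

theorem lt_of_kAryTree_pathGraph {w : ℕ} {B : Fin (m + 1) → Set (KAryVertex h 3)}
    (hd : IsDeconstruction (kAryTree h 3) (pathGraph (m + 1)) B)
    (hw : DeconWidthLE (pathGraph (m + 1)) B w) (hm : 0 < m) : h < w := by
  obtain ⟨t, ht⟩ := hd.exists_le_ncard_activeDescendants hm h ⟨[], by simp⟩ (by simp)
  calc h < (activeDescendants B t ⟨[], by simp⟩).ncard := ht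
    _ ≤ (B t.castSucc ∪ B t.succ).ncard :=
      Set.ncard_le_ncard (fun _ hg => hg.2) (Set.toFinite _)
    _ ≤ w := hw _ _ (Or.inr (pathGraph_adj.mpr (Or.inl (by simp))))

end IsDeconstruction

end KAryTreeInPath

/-- (1) `ℒ ⋠ 𝒯`; (2) `𝒯 ⋠ 𝒫`; (3) `𝒫 ⋠ ℱ_d` for every `d ≥ 0`. -/
theorem top_hierarchy :
    ¬ DeconLE classL classT ∧
    ¬ DeconLE classT classP ∧
    (∀ d : ℕ, ¬ DeconLE classP (classFd d)) := by
  refine ⟨fun ⟨w, hw⟩ => ?_, fun ⟨w, hw⟩ => ?_, fun d ⟨w, hw⟩ => ?_⟩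
  · obtain ⟨H, hH, B, hd, hwB⟩ := hw ⟨w + 1, ⊤⟩ trivial
    simpa using hH.card_le_of_isDeconstruction_top hd hwB
  · have := Fintype.ofFinite (KAryVertex w 3)
    let φ := overFinIso (kAryTree w 3) rfl
    obtain ⟨H, ⟨m, hm, ⟨ψ⟩⟩, B, hd, hwB⟩ := hw ⟨_, _⟩ (φ.isTree_iff.mp kAryTree.isTree)
    obtain ⟨m, rfl⟩ : ∃ m', m = m' + 1 := ⟨m - 1, by omega⟩
    exact lt_irrefl w <| (hd.of_iso φ.symm ψ).lt_of_kAryTree_pathGraph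
      (hwB.of_iso φ.symm.toEquiv ψ) (by omega)
  · have htwo : 2 ≤ (w + 1) ^ (d + 1) + 1 := by
      have := Nat.one_le_pow (d + 1) (w + 1) (by omega)
      omega
    obtain ⟨H, ⟨hH, hheight⟩, B, hd, hwB⟩ :=
      hw ⟨(w + 1) ^ (d + 1) + 1, pathGraph _⟩ ⟨_, htwo, ⟨.refl⟩⟩
    have := hd.add_one_le_pow_of_pathGraph hH hwB hheight
    omega
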